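/- Let K : ℝ^N → ℝ^M be a linear map, let S ⊆ {1,…,M} be a set of indices (the locations where data is measured), let χ_S : ℝ^M → ℝ^M denote the coordinate projection (χ_S v)_j = v_j for j ∈ S and 0 otherwise, let f ∈ ℝ^M satisfy f_j = 0 for j ∉ S, let μ > 0, and let c > 0 with c‖K‖ < 1. Then for any initial guess g⁰ ∈ ℝ^N, the iterates gⁿ = 𝐒_{c²μ}(g^{n−1} + c² K^T (f − χ_S K g^{n−1})), n = 1, 2, …, where 𝐒_λ is componentwise soft-thresholding with parameter λ, converge to a minimizer of the functional g ↦ Σ_{j∈S} ((K g)_j − f_j)² + μ‖g‖₁. -/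

import Mathlib

/-!
Put `L = χ_S ∘ K`. Because `f` vanishes off `S`, the functional is `Φ g = ‖L g - f‖² + μ ‖g‖₁`
and the iteration is the ISTA step `T g = 𝐒_{c²μ} (g + c² Lᵀ (f - L g))`. Coordinatewise, soft
thresholding minimizes `(t - w)² + λ |t|` with quadratic margin `(t - 𝐒_λ w)²`, so `T a` minimizes
the surrogate `c² Φ g + ‖g - a‖² - c² ‖L (g - a)‖²` with margin `‖g - T a‖²`. Since `c ‖L‖ < 1`,
this one inequality shows that the fixed points of `T` are exactly the minimizers of `Φ` (which
exist by coercivity), and that `‖T x - q‖² + (1 - c² ‖L‖²) ‖T x - x‖² ≤ ‖x - q‖²` for each of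
them. A sequence that is Fejér monotone in this strong sense is bounded with steps tending to
zero, so a cluster point is a fixed point and the whole sequence converges to it.
-/

open Real

noncomputable def softThreshold (μ v : ℝ) : ℝ :=
  if v ≤ -μ / 2 then v + μ / 2 else if v < μ / 2 then 0 else v - μ / 2

open Filter Topology Function

section Fejer

variable {X : Type*} [MetricSpace X] {T : X → X} {u : ℕ → X} {δ : ℝ}

theorem antitone_dist_of_fejer (hu : ∀ n, u (n + 1) = T (u n)) (hδ : 0 ≤ δ)
    (hT : ∀ q, IsFixedPt T q → ∀ x, dist (T x) q ^ 2 + δ * dist (T x) x ^ 2 ≤ dist x q ^ 2)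
    {q : X} (hq : IsFixedPt T q) : Antitone fun n => dist (u n) q := by
  refine antitone_nat_of_succ_le fun n => ?_
  have hstep := hT q hq (u n)
  rw [← hu] at hstep
  exact (pow_le_pow_iff_left₀ dist_nonneg dist_nonneg two_ne_zero).1 <|
    (le_add_of_nonneg_right (by positivity)).trans hstep

theorem tendsto_dist_succ_of_fejer (hu : ∀ n, u (n + 1) = T (u n)) (hδ : 0 < δ)
    (hT : ∀ q, IsFixedPt T q → ∀ x, dist (T x) q ^ 2 + δ * dist (T x) x ^ 2 ≤ dist x q ^ 2)
    {q : X} (hq : IsFixedPt T q) : Tendsto (fun n => dist (u (n + 1)) (u n)) atTop (𝓝 0) := by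
  set a : ℕ → ℝ := fun n => dist (u n) q ^ 2
  have ha : Antitone a := fun m n hmn =>
    pow_le_pow_left₀ dist_nonneg (antitone_dist_of_fejer hu hδ.le hT hq hmn) 2
  obtain ⟨l, hl⟩ : ∃ l, Tendsto a atTop (𝓝 l) :=
    ⟨_, tendsto_atTop_ciInf ha ⟨0, by rintro _ ⟨n, rfl⟩; positivity⟩⟩
  have hdrop : Tendsto (fun n => (a n - a (n + 1)) / δ) atTop (𝓝 0) := by
    simpa using (hl.sub (hl.comp (tendsto_add_atTop_nat 1))).div_const δ
  have hsq : Tendsto (fun n => dist (u (n + 1)) (u n) ^ 2) atTop (𝓝 0) := by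
    refine squeeze_zero (fun n => by positivity) (fun n => ?_) hdrop
    rw [le_div_iff₀ hδ]
    have hstep := hT q hq (u n)
    rw [← hu] at hstep
    linarith
  simpa [Real.sqrt_sq dist_nonneg] using hsq.sqrt

theorem tendsto_of_antitone_dist_of_subseq {q : X} (hu : Antitone fun n => dist (u n) q)
    {φ : ℕ → ℕ} (hφ : StrictMono φ) (huφ : Tendsto (u ∘ φ) atTop (𝓝 q)) :
    Tendsto u atTop (𝓝 q) := by
  rw [tendsto_iff_dist_tendsto_zero] at huφ ⊢
  have hinf := tendsto_atTop_ciInf hu ⟨0, by rintro _ ⟨n, rfl⟩; exact dist_nonneg⟩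
  rwa [tendsto_nhds_unique (hinf.comp hφ.tendsto_atTop) huφ] at hinf

theorem exists_isFixedPt_tendsto_of_fejer [ProperSpace X] (hTc : Continuous T)
    (hu : ∀ n, u (n + 1) = T (u n)) (hδ : 0 < δ)
    (hT : ∀ q, IsFixedPt T q → ∀ x, dist (T x) q ^ 2 + δ * dist (T x) x ^ 2 ≤ dist x q ^ 2)
    {p : X} (hp : IsFixedPt T p) : ∃ q, IsFixedPt T q ∧ Tendsto u atTop (𝓝 q) := by
  have hbdd : ∀ n, u n ∈ Metric.closedBall p (dist (u 0) p) := fun n =>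
    antitone_dist_of_fejer hu hδ.le hT hp (Nat.zero_le n)
  obtain ⟨q, -, φ, hφ, huφ⟩ := tendsto_subseq_of_bounded Metric.isBounded_closedBall hbdd
  have hnext : Tendsto (fun k => u (φ k + 1)) atTop (𝓝 q) :=
    huφ.congr_dist <| ((tendsto_dist_succ_of_fejer hu hδ hT hp).comp hφ.tendsto_atTop).congr
      fun k => dist_comm _ _
  have hq : IsFixedPt T q := by
    refine tendsto_nhds_unique ?_ hnext
    simp only [hu]
    exact (hTc.tendsto q).comp huφ
  exact ⟨q, hq, tendsto_of_antitone_dist_of_subseq (antitone_dist_of_fejer hu hδ.le hT hq) hφ huφ⟩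

end Fejer

theorem softThreshold_eq_sub_clamp {μ : ℝ} (hμ : 0 ≤ μ) (v : ℝ) :
    softThreshold μ v = v - max (-(μ / 2)) (min (μ / 2) v) := by
  unfold softThreshold
  split_ifs <;> simp only [max_def, min_def] <;> split_ifs <;> linarith

theorem continuous_softThreshold {μ : ℝ} (hμ : 0 ≤ μ) : Continuous (softThreshold μ) := by
  simp only [funext (softThreshold_eq_sub_clamp hμ)]
  fun_prop

theorem softThreshold_prox {μ : ℝ} (hμ : 0 ≤ μ) (w t : ℝ) :
    (softThreshold μ w - w) ^ 2 + μ * |softThreshold μ w| + (t - softThreshold μ w) ^ 2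
      ≤ (t - w) ^ 2 + μ * |t| := by
  have ht := le_abs_self t
  have ht' := neg_abs_le t
  unfold softThreshold
  split_ifs with hlow hmid
  · rw [abs_of_nonpos (by linarith)]
    nlinarith
  · rw [abs_zero]
    nlinarith [mul_nonneg (sub_nonneg.2 ht) (by linarith : 0 ≤ μ / 2 + w),
      mul_nonneg (by linarith : 0 ≤ |t| + t) (by linarith : 0 ≤ μ / 2 - w)]
  · rw [abs_of_nonneg (by linarith)]
    nlinarith

section SoftThresholdVec

variable {ι : Type*}

noncomputable def softThresholdVec (μ : ℝ) (w : EuclideanSpace ℝ ι) : EuclideanSpace ℝ ι :=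
  WithLp.toLp 2 fun i => softThreshold μ (w i)

theorem continuous_softThresholdVec {μ : ℝ} (hμ : 0 ≤ μ) :
    Continuous (softThresholdVec (ι := ι) μ) := by
  unfold softThresholdVec
  have := continuous_softThreshold hμ
  fun_prop

theorem softThresholdVec_prox [Fintype ι] {μ : ℝ} (hμ : 0 ≤ μ) (w g : EuclideanSpace ℝ ι) :
    ‖softThresholdVec μ w - w‖ ^ 2 + μ * ∑ i, |softThresholdVec μ w i|
        + ‖g - softThresholdVec μ w‖ ^ 2
      ≤ ‖g - w‖ ^ 2 + μ * ∑ i, |g i| := by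
  simp only [EuclideanSpace.real_norm_sq_eq, PiLp.sub_apply, Finset.mul_sum,
    ← Finset.sum_add_distrib]
  exact Finset.sum_le_sum fun i _ => softThreshold_prox hμ (w i) (g i)

theorem EuclideanSpace.norm_le_sum_abs [Fintype ι] (g : EuclideanSpace ℝ ι) :
    ‖g‖ ≤ ∑ i, |g i| := by
  refine (pow_le_pow_iff_left₀ (norm_nonneg g) (by positivity) two_ne_zero).1 ?_
  rw [EuclideanSpace.real_norm_sq_eq]
  simpa only [sq_abs] using Finset.sum_sq_le_sq_sum_of_nonneg (s := Finset.univ)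
    (f := fun i => |g i|) fun i _ => abs_nonneg (g i)

end SoftThresholdVec

open scoped RealInnerProductSpace in
theorem norm_sub_gradientStep_sq {E F : Type*} [NormedAddCommGroup E] [InnerProductSpace ℝ E]
    [CompleteSpace E] [NormedAddCommGroup F] [InnerProductSpace ℝ F] [CompleteSpace F]
    (L : E →L[ℝ] F) (f : F) (τ : ℝ) (a g : E) :
    ‖g - (a + τ • L.adjoint (f - L a))‖ ^ 2
      = ‖g - a‖ ^ 2 + τ * (‖L g - f‖ ^ 2 - ‖L (g - a)‖ ^ 2 - ‖L a - f‖ ^ 2)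
        + τ ^ 2 * ‖L.adjoint (f - L a)‖ ^ 2 := by
  have hstep : g - (a + τ • L.adjoint (f - L a)) = (g - a) - τ • L.adjoint (f - L a) := by abel
  have hres : L g - f = L (g - a) + (L a - f) := by rw [map_sub]; abel
  have hflip : ⟪L (g - a), f - L a⟫ = -⟪L (g - a), L a - f⟫ := by
    rw [← inner_neg_right, neg_sub]
  rw [hstep, norm_sub_sq_real, hres, norm_add_sq_real, real_inner_smul_right,
    ContinuousLinearMap.adjoint_inner_right, hflip, norm_smul, mul_pow, Real.norm_eq_abs, sq_abs]
  ring

section Ista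

variable {ι : Type*} [Fintype ι] {F : Type*} [NormedAddCommGroup F] [InnerProductSpace ℝ F]
  (L : EuclideanSpace ℝ ι →L[ℝ] F) (f : F) (μ τ : ℝ)

noncomputable def lassoObjective (g : EuclideanSpace ℝ ι) : ℝ :=
  ‖L g - f‖ ^ 2 + μ * ∑ i, |g i|

theorem continuous_lassoObjective : Continuous (lassoObjective L f μ) := by
  unfold lassoObjective
  fun_prop

theorem exists_forall_lassoObjective_le (hμ : 0 < μ) :
    ∃ q, ∀ g, lassoObjective L f μ q ≤ lassoObjective L f μ g := by
  refine (continuous_lassoObjective L f μ).exists_forall_le <|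
    tendsto_atTop_mono (fun g => ?_) (tendsto_norm_cocompact_atTop.const_mul_atTop hμ)
  have := mul_le_mul_of_nonneg_left (EuclideanSpace.norm_le_sum_abs g) hμ.le
  unfold lassoObjective
  linarith [sq_nonneg ‖L g - f‖]

variable [CompleteSpace F]

noncomputable def istaStep (g : EuclideanSpace ℝ ι) : EuclideanSpace ℝ ι :=
  softThresholdVec (τ * μ) (g + τ • L.adjoint (f - L g))

noncomputable def lassoSurrogate (a g : EuclideanSpace ℝ ι) : ℝ :=
  τ * lassoObjective L f μ g + ‖g - a‖ ^ 2 - τ * ‖L (g - a)‖ ^ 2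

theorem continuous_istaStep (hμ : 0 ≤ μ) (hτ : 0 ≤ τ) : Continuous (istaStep L f μ τ) :=
  (continuous_softThresholdVec (mul_nonneg hτ hμ)).comp (by fun_prop)

theorem lassoSurrogate_istaStep_add_le (hμ : 0 ≤ μ) (hτ : 0 ≤ τ) (a g : EuclideanSpace ℝ ι) :
    lassoSurrogate L f μ τ a (istaStep L f μ τ a) + ‖g - istaStep L f μ τ a‖ ^ 2
      ≤ lassoSurrogate L f μ τ a g := by
  have hprox := softThresholdVec_prox (mul_nonneg hτ hμ) (a + τ • L.adjoint (f - L a)) g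
  rw [norm_sub_gradientStep_sq, norm_sub_gradientStep_sq] at hprox
  unfold lassoSurrogate lassoObjective istaStep
  linarith

theorem istaStep_eq_self_of_forall_le (hμ : 0 ≤ μ) (hτ : 0 ≤ τ) (hL : τ * ‖L‖ ^ 2 ≤ 1)
    {q : EuclideanSpace ℝ ι} (hq : ∀ g, lassoObjective L f μ q ≤ lassoObjective L f μ g) :
    istaStep L f μ τ q = q := by
  have hsur := lassoSurrogate_istaStep_add_le L f μ τ hμ hτ q q
  set p := istaStep L f μ τ q
  have hmin := mul_le_mul_of_nonneg_left (hq p) hτ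
  have hLp : τ * ‖L (p - q)‖ ^ 2 ≤ ‖p - q‖ ^ 2 := calc
    τ * ‖L (p - q)‖ ^ 2 ≤ τ * (‖L‖ * ‖p - q‖) ^ 2 := by gcongr; exact L.le_opNorm _
    _ = τ * ‖L‖ ^ 2 * ‖p - q‖ ^ 2 := by ring
    _ ≤ ‖p - q‖ ^ 2 := mul_le_of_le_one_left (by positivity) hL
  simp only [lassoSurrogate, sub_self, map_zero, norm_zero, norm_sub_rev q p] at hsur
  have hpq : ‖p - q‖ ^ 2 = 0 := le_antisymm (by linarith) (by positivity)
  simpa [sub_eq_zero] using hpq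

theorem lassoObjective_le_of_istaStep_eq_self (hμ : 0 ≤ μ) (hτ : 0 < τ) {q : EuclideanSpace ℝ ι}
    (hq : istaStep L f μ τ q = q) (g : EuclideanSpace ℝ ι) :
    lassoObjective L f μ q ≤ lassoObjective L f μ g := by
  have hsur := lassoSurrogate_istaStep_add_le L f μ τ hμ hτ.le q g
  simp only [hq, lassoSurrogate, sub_self, map_zero, norm_zero] at hsur
  have : τ * lassoObjective L f μ q ≤ τ * lassoObjective L f μ g := by
    nlinarith [sq_nonneg ‖L (g - q)‖]
  exact le_of_mul_le_mul_left this hτ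

theorem dist_istaStep_sq_add_le (hμ : 0 ≤ μ) (hτ : 0 ≤ τ) {q : EuclideanSpace ℝ ι}
    (hq : ∀ g, lassoObjective L f μ q ≤ lassoObjective L f μ g) (x : EuclideanSpace ℝ ι) :
    dist (istaStep L f μ τ x) q ^ 2 + (1 - τ * ‖L‖ ^ 2) * dist (istaStep L f μ τ x) x ^ 2
      ≤ dist x q ^ 2 := by
  have hsur := lassoSurrogate_istaStep_add_le L f μ τ hμ hτ x q
  set p := istaStep L f μ τ x
  have hmin := mul_le_mul_of_nonneg_left (hq p) hτ
  have hLp : τ * ‖L (p - x)‖ ^ 2 ≤ τ * ‖L‖ ^ 2 * ‖p - x‖ ^ 2 := calc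
    τ * ‖L (p - x)‖ ^ 2 ≤ τ * (‖L‖ * ‖p - x‖) ^ 2 := by gcongr; exact L.le_opNorm _
    _ = τ * ‖L‖ ^ 2 * ‖p - x‖ ^ 2 := by ring
  have hLq : 0 ≤ τ * ‖L (q - x)‖ ^ 2 := by positivity
  simp only [dist_eq_norm, lassoSurrogate, norm_sub_rev q p, norm_sub_rev q x] at hsur ⊢
  linarith

end Ista

section StarProjection

variable {E F : Type*} [NormedAddCommGroup E] [InnerProductSpace ℝ E]
  [NormedAddCommGroup F] [InnerProductSpace ℝ F] [CompleteSpace F] {P : F →L[ℝ] F}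

theorem IsStarProjection.adjoint_comp_apply_sub [CompleteSpace E] (hP : IsStarProjection P)
    {f : F} (hf : P f = f) (K : E →L[ℝ] F) (x : E) :
    (P ∘L K).adjoint (f - P (K x)) = K.adjoint (f - P (K x)) := by
  have hPP : P (P (K x)) = P (K x) := congrArg (· (K x)) hP.isIdempotentElem.eq
  rw [ContinuousLinearMap.adjoint_comp, ← ContinuousLinearMap.star_eq_adjoint,
    hP.isSelfAdjoint.star_eq, ContinuousLinearMap.comp_apply, map_sub, hf, hPP]

theorem IsStarProjection.norm_comp_le (hP : IsStarProjection P) (K : E →L[ℝ] F) :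
    ‖P ∘L K‖ ≤ ‖K‖ :=
  (P.opNorm_comp_le K).trans (mul_le_of_le_one_left (norm_nonneg K) (hP.norm_le P))

end StarProjection

section CoordProj

variable {ι : Type*} [Fintype ι] [DecidableEq ι] (S : Finset ι)

noncomputable def coordProj : EuclideanSpace ℝ ι →L[ℝ] EuclideanSpace ℝ ι :=
  LinearMap.toContinuousLinearMap
    { toFun := fun v => WithLp.toLp 2 fun j => if j ∈ S then v j else 0
      map_add' := fun v w => by ext j; simp only [PiLp.add_apply]; split_ifs <;> simp
      map_smul' := fun a v => by ext j; simp only [PiLp.smul_apply]; split_ifs <;> simp }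

theorem coordProj_apply (v : EuclideanSpace ℝ ι) (j : ι) :
    coordProj S v j = if j ∈ S then v j else 0 := rfl

theorem isStarProjection_coordProj : IsStarProjection (coordProj S) where
  isIdempotentElem := by
    ext v j
    simp only [mul_apply_eq_comp, coordProj_apply]
    split_ifs <;> rfl
  isSelfAdjoint := ContinuousLinearMap.isSelfAdjoint_iff_isSymmetric.2 fun v w => by
    simp only [ContinuousLinearMap.coe_coe, PiLp.inner_apply, coordProj_apply]
    refine Finset.sum_congr rfl fun j _ => ?_
    split_ifs <;> simp

variable {S} {f : EuclideanSpace ℝ ι}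

theorem coordProj_eq_self (hf : ∀ j ∉ S, f j = 0) : coordProj S f = f := by
  ext j
  rw [coordProj_apply]
  split_ifs with hj
  · rfl
  · exact (hf j hj).symm

theorem norm_coordProj_sub_sq (hf : ∀ j ∉ S, f j = 0) (v : EuclideanSpace ℝ ι) :
    ‖coordProj S v - f‖ ^ 2 = ∑ j ∈ S, (v j - f j) ^ 2 := by
  rw [EuclideanSpace.real_norm_sq_eq, ← Finset.sum_subset (Finset.subset_univ S)]
  · refine Finset.sum_congr rfl fun j hj => ?_
    rw [PiLp.sub_apply, coordProj_apply, if_pos hj]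
  · intro j _ hj
    rw [PiLp.sub_apply, coordProj_apply, if_neg hj, hf j hj]
    simp

end CoordProj

/-- With missing data (measurements only on the index set `S`), the iterates
`gⁿ = 𝐒_{c²μ}(g^{n-1} + c² Kᵀ (f - χ_S K g^{n-1}))` converge to a minimizer of
`g ↦ ∑_{j ∈ S} ((K g)_j - f_j)² + μ ‖g‖₁`. -/
theorem soft_thresholding_missing_data_converges (N M : ℕ)
    (K : EuclideanSpace ℝ (Fin N) →L[ℝ] EuclideanSpace ℝ (Fin M))
    (S : Finset (Fin M)) (f : EuclideanSpace ℝ (Fin M))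
    (hf : ∀ j : Fin M, j ∉ S → f j = 0)
    (μ c : ℝ) (hμ : 0 < μ) (hc : 0 < c) (hK : c * ‖K‖ < 1)
    (g : ℕ → EuclideanSpace ℝ (Fin N))
    (hrec : ∀ n : ℕ, g (n + 1) = (show EuclideanSpace ℝ (Fin N) from WithLp.toLp 2 fun i =>
      softThreshold (c ^ 2 * μ)
        ((g n + c ^ 2 • (ContinuousLinearMap.adjoint K)
          (f - (show EuclideanSpace ℝ (Fin M) from WithLp.toLp 2 fun j =>
            if j ∈ S then K (g n) j else 0))) i))) :
    ∃ glim : EuclideanSpace ℝ (Fin N),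
      Filter.Tendsto g Filter.atTop (nhds glim) ∧
      ∀ h : EuclideanSpace ℝ (Fin N),
        (∑ j ∈ S, ((K glim) j - f j) ^ 2) + μ * ∑ i, |glim i|
          ≤ (∑ j ∈ S, ((K h) j - f j) ^ 2) + μ * ∑ i, |h i| := by
  set L := coordProj S ∘L K with hLdef
  have hP := isStarProjection_coordProj S
  have hτ : 0 < c ^ 2 := by positivity
  have hL : c ^ 2 * ‖L‖ ^ 2 < 1 := calc
    c ^ 2 * ‖L‖ ^ 2 = (c * ‖L‖) ^ 2 := by ring
    _ ≤ (c * ‖K‖) ^ 2 := by gcongr; exact hP.norm_comp_le K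
    _ < 1 := pow_lt_one₀ (by positivity) hK two_ne_zero
  have hstep : ∀ n, g (n + 1) = istaStep L f μ (c ^ 2) (g n) := fun n => by
    rw [hrec n, istaStep, hLdef, ContinuousLinearMap.comp_apply,
      hP.adjoint_comp_apply_sub (coordProj_eq_self hf)]
    rfl
  obtain ⟨p, hp⟩ := exists_forall_lassoObjective_le L f μ hμ
  obtain ⟨q, hq, hlim⟩ := exists_isFixedPt_tendsto_of_fejer
    (continuous_istaStep L f μ _ hμ.le hτ.le) hstep (sub_pos.2 hL)
    (fun q hq => dist_istaStep_sq_add_le L f μ _ hμ.le hτ.le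
      (lassoObjective_le_of_istaStep_eq_self L f μ _ hμ.le hτ hq))
    (istaStep_eq_self_of_forall_le L f μ _ hμ.le hτ.le hL.le hp)
  refine ⟨q, hlim, fun h => ?_⟩
  have hmin := lassoObjective_le_of_istaStep_eq_self L f μ _ hμ.le hτ hq h
  simpa only [lassoObjective, L, ContinuousLinearMap.comp_apply, norm_coordProj_sub_sq hf]
    using hmin
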